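/- There exist ε > 0 and a function c : (−ε, ε) → ℝ with c(0) = c₀ such that (1/n)(1 − F_θ(c(θ))^n) = q for all θ ∈ (−ε, ε), c is differentiable at 0, and c'(0) = (∫_{c₀}^∞ s(r) f(r) dr) / f(c₀). (In the second-price auction with a quantity-targeting reserve price, the factor F(c₀)^{n−1} cancels and the influence function of the reserve price is ψ(r) = 1{r > c₀}/f(c₀), exactly as in the single-unit price-based allocation.) -/

import Mathlib

/-!
Write `F` for the distribution function of `f` and `S x = ∫_{-∞}^x s f`. The perturbed
distribution function is `F_θ = F + θ S`, so the reserve price solves `F (c θ) + θ S (c θ) = F c₀`.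
Since `f ≥ f c₀ / 2 > 0` near `c₀` and `S` is bounded, the intermediate value theorem gives a
solution `c θ` near `c₀` for small `θ`, with `|c θ - c₀| = O(θ)`. Linearising `F` at `c₀` in the
equation then gives `c'(0) = -S c₀ / f c₀`, and `-S c₀ = ∫_{c₀}^∞ s f` because `s f` has mean zero.
-/

open MeasureTheory Set Filter Asymptotics Topology

lemma hasDerivAt_integral_Iic {g : ℝ → ℝ} (hg : Integrable g) {x : ℝ} (hx : ContinuousAt g x) :
    HasDerivAt (fun y => ∫ t in Iic y, g t) (g x) x := by
  have h : (fun y => ∫ t in Iic y, g t) =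
      fun y => (∫ t in Iic 0, g t) + ∫ t in (0 : ℝ)..y, g t := by
    funext y
    rw [← intervalIntegral.integral_Iic_sub_Iic hg.integrableOn hg.integrableOn]
    ring
  rw [h]
  exact (intervalIntegral.integral_hasDerivAt_right hg.intervalIntegrable
    hg.aestronglyMeasurable.stronglyMeasurableAtFilter hx).const_add _

section Density

variable {α : Type*} [MeasurableSpace α] {μ : Measure α}

lemma abs_setIntegral_mul_le_of_integral_eq_one {f s : α → ℝ} {M : ℝ} (hf : Integrable f μ)
    (hf_nonneg : ∀ x, 0 ≤ f x) (hf_one : ∫ x, f x ∂μ = 1) (hsM : ∀ x, |s x| ≤ M) (A : Set α) :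
    |∫ x in A, s x * f x ∂μ| ≤ M := by
  have hsf : ∀ x, ‖s x * f x‖ ≤ M * f x := fun x => by
    rw [Real.norm_eq_abs, abs_mul, abs_of_nonneg (hf_nonneg x)]
    exact mul_le_mul_of_nonneg_right (hsM x) (hf_nonneg x)
  calc |∫ x in A, s x * f x ∂μ|
      ≤ ∫ x in A, M * f x ∂μ := by
        simpa only [Real.norm_eq_abs] using
          norm_integral_le_of_norm_le (hf.const_mul M).integrableOn (.of_forall hsf)
    _ ≤ ∫ x, M * f x ∂μ :=
        setIntegral_le_integral (hf.const_mul M) (.of_forall fun x => (norm_nonneg _).trans (hsf x))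
    _ = M := by rw [integral_const_mul, hf_one, mul_one]

lemma integral_mul_one_add_mul {f s : α → ℝ} (hf : Integrable f μ)
    (hsf : Integrable (fun x => s x * f x) μ) (θ : ℝ) :
    ∫ x, f x * (1 + θ * s x) ∂μ = ∫ x, f x ∂μ + θ * ∫ x, s x * f x ∂μ := by
  rw [← integral_const_mul, ← integral_add hf (hsf.const_mul θ)]
  congr 1 with x
  ring

end Density

lemma mul_sub_le_sub_of_le_deriv_Icc {F f : ℝ → ℝ} {a b m : ℝ} (hF : ∀ x, HasDerivAt F (f x) x)
    (hm : ∀ x ∈ Icc a b, m ≤ f x) {x y : ℝ} (hx : x ∈ Icc a b) (hy : y ∈ Icc a b) (hxy : x ≤ y) :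
    m * (y - x) ≤ F y - F x :=
  (convex_Icc a b).mul_sub_le_image_sub_of_le_deriv
    (fun z _ => (hF z).continuousAt.continuousWithinAt)
    (fun z _ => (hF z).differentiableAt.differentiableWithinAt)
    (fun z hz => (hF z).deriv ▸ hm z (interior_subset hz)) x hx y hy hxy

lemma mul_abs_sub_le_abs_sub_of_le_deriv_Icc {F f : ℝ → ℝ} {a b m : ℝ} (hm0 : 0 ≤ m)
    (hF : ∀ x, HasDerivAt F (f x) x) (hm : ∀ x ∈ Icc a b, m ≤ f x) {x y : ℝ}
    (hx : x ∈ Icc a b) (hy : y ∈ Icc a b) : m * |y - x| ≤ |F y - F x| := by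
  wlog hxy : x ≤ y generalizing x y
  · rw [abs_sub_comm, abs_sub_comm (F y)]
    exact this hy hx (le_of_not_ge hxy)
  have h := mul_sub_le_sub_of_le_deriv_Icc hF hm hx hy hxy
  have h0 : 0 ≤ m * (y - x) := mul_nonneg hm0 (sub_nonneg.2 hxy)
  rwa [abs_of_nonneg (sub_nonneg.2 hxy), abs_of_nonneg (h0.trans h)]

lemma exists_mem_Icc_add_mul_eq {F S : ℝ → ℝ} {a b M θ y : ℝ} (hF : Continuous F)
    (hS : Continuous S) (hSM : ∀ x, |S x| ≤ M) (hab : a ≤ b)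
    (ha : F a + |θ| * M ≤ y) (hb : y ≤ F b - |θ| * M) :
    ∃ x ∈ Icc a b, F x + θ * S x = y := by
  have hθS : ∀ x, |θ * S x| ≤ |θ| * M := fun x => by
    rw [abs_mul]
    exact mul_le_mul_of_nonneg_left (hSM x) (abs_nonneg θ)
  refine intermediate_value_Icc (f := fun x => F x + θ * S x) hab (hF.add (continuous_const.mul hS)).continuousOn ⟨?_, ?_⟩
  · linarith [(abs_le.1 (hθS a)).2]
  · linarith [(abs_le.1 (hθS b)).1]

lemma exists_local_solution_add_mul_eq {F f S : ℝ → ℝ} {M c₀ : ℝ}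
    (hF : ∀ x, HasDerivAt F (f x) x) (hf : ContinuousAt f c₀) (hfc₀ : 0 < f c₀)
    (hS : Continuous S) (hSM : ∀ x, |S x| ≤ M) :
    ∃ ε > 0, ∃ K, ∃ c : ℝ → ℝ, ∀ θ ∈ Ioo (-ε) ε,
      F (c θ) + θ * S (c θ) = F c₀ ∧ |c θ - c₀| ≤ K * |θ| := by
  obtain ⟨m, hm, hmf⟩ : ∃ m, 0 < m ∧ m < f c₀ := ⟨f c₀ / 2, half_pos hfc₀, half_lt_self hfc₀⟩
  obtain ⟨δ, hδ, hfδ⟩ := Metric.nhds_basis_closedBall.eventually_iff.1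
    (hf.eventually (eventually_ge_nhds hmf))
  simp only [Real.closedBall_eq_Icc] at hfδ
  have hc₀ : c₀ ∈ Icc (c₀ - δ) (c₀ + δ) := ⟨by linarith, by linarith⟩
  have hleft := mul_sub_le_sub_of_le_deriv_Icc hF hfδ ⟨le_rfl, by linarith⟩ hc₀ (by linarith)
  have hright := mul_sub_le_sub_of_le_deriv_Icc hF hfδ hc₀ ⟨by linarith, le_rfl⟩ (by linarith)
  have hM : 0 ≤ M := (abs_nonneg _).trans (hSM 0)
  have hFcont : Continuous F := continuous_iff_continuousAt.2 fun x => (hF x).continuousAt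
  refine ⟨m * δ / (M + 1), by positivity, M / m, ?_⟩
  have hsol : ∀ θ ∈ Ioo (-(m * δ / (M + 1))) (m * δ / (M + 1)),
      ∃ x ∈ Icc (c₀ - δ) (c₀ + δ), F x + θ * S x = F c₀ := by
    intro θ hθ
    have hθM : |θ| * M ≤ m * δ := by
      have h := (lt_div_iff₀ (by positivity)).1 (abs_lt.2 hθ)
      nlinarith [abs_nonneg θ]
    exact exists_mem_Icc_add_mul_eq hFcont hS hSM (by linarith) (by linarith) (by linarith)
  choose! c hc_mem hc_eq using hsol
  refine ⟨c, fun θ hθ => ⟨hc_eq θ hθ, ?_⟩⟩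
  -- `F` grows at rate at least `m` near `c₀`, while `|F (c θ) - F c₀| = |θ S (c θ)| ≤ |θ| M`.
  have hgrowth := mul_abs_sub_le_abs_sub_of_le_deriv_Icc hm.le hF hfδ hc₀ (hc_mem θ hθ)
  have hθS : |F (c θ) - F c₀| ≤ |θ| * M := by
    rw [show F (c θ) - F c₀ = -(θ * S (c θ)) by linarith [hc_eq θ hθ], abs_neg, abs_mul]
    exact mul_le_mul_of_nonneg_left (hSM _) (abs_nonneg θ)
  rw [div_mul_eq_mul_div, le_div_iff₀ hm]
  linarith

lemma hasDerivAt_of_eventually_add_mul_eq {F S c : ℝ → ℝ} {d c₀ : ℝ} (hF : HasDerivAt F d c₀)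
    (hd : d ≠ 0) (hS : ContinuousAt S c₀) (hc0 : c 0 = c₀)
    (hcO : (fun θ => c θ - c₀) =O[𝓝 0] fun θ => θ)
    (heq : ∀ᶠ θ in 𝓝 0, F (c θ) + θ * S (c θ) = F c₀) :
    HasDerivAt c (-S c₀ / d) 0 := by
  have hc : Tendsto c (𝓝 0) (𝓝 c₀) := tendsto_sub_nhds_zero_iff.1 (hcO.trans_tendsto tendsto_id)
  have hF_lin : (fun θ => F (c θ) - F c₀ - (c θ - c₀) * d) =o[𝓝 0] fun θ => θ := by
    have h := (hasDerivAt_iff_isLittleO.1 hF).comp_tendsto hc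
    simp only [Function.comp_def, smul_eq_mul] at h
    exact h.trans_isBigO hcO
  have hS_lin : (fun θ => θ * (S (c θ) - S c₀)) =o[𝓝 0] fun θ => θ := by
    have h : Tendsto (fun θ => S (c θ) - S c₀) (𝓝 0) (𝓝 0) :=
      tendsto_sub_nhds_zero_iff.2 (hS.tendsto.comp hc)
    simpa using (isBigO_refl (fun θ : ℝ => θ) (𝓝 0)).mul_isLittleO ((isLittleO_one_iff ℝ).2 h)
  rw [hasDerivAt_iff_isLittleO_nhds_zero, hc0]
  simp only [zero_add, smul_eq_mul]
  refine (((hF_lin.neg_left.sub hS_lin).const_mul_left d⁻¹)).congr' ?_ EventuallyEq.rfl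
  filter_upwards [heq] with θ hθ
  field_simp
  linarith

theorem stmt13_general (n : ℕ) (f s : ℝ → ℝ)
    (hf_cont : Continuous f) (hf_nonneg : ∀ x, 0 ≤ f x) (hf_prob : ∫ x, f x = 1)
    (hs_cont : Continuous s) (Ms : ℝ) (hs_bdd : ∀ x, |s x| ≤ Ms)
    (hs_mean : ∫ r, s r * f r = 0)
    (q : ℝ)
    (c₀ : ℝ) (hc₀ : (1 / n : ℝ) * (1 - (∫ r in Iic c₀, f r) ^ n) = q)
    (hfc₀_pos : 0 < f c₀) :
    ∃ ε > (0 : ℝ), ∃ c : ℝ → ℝ, c 0 = c₀ ∧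
      (∀ θ ∈ Ioo (-ε) ε,
        (1 / n : ℝ) * (1 - (∫ r in Iic (c θ), f r * (1 + θ * s r)) ^ n) = q) ∧
      HasDerivAt c ((∫ r in Ioi c₀, s r * f r) / f c₀) 0 := by
  have hf_int : Integrable f := .of_integral_ne_zero (by rw [hf_prob]; exact one_ne_zero)
  have hsf_int : Integrable (fun r => s r * f r) :=
    hf_int.bdd_mul hs_cont.aestronglyMeasurable (.of_forall hs_bdd)
  set S : ℝ → ℝ := fun x => ∫ r in Iic x, s r * f r
  have hF : ∀ x, HasDerivAt (fun x => ∫ r in Iic x, f r) (f x) x :=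
    fun x => hasDerivAt_integral_Iic hf_int hf_cont.continuousAt
  have hS : Continuous S := continuous_iff_continuousAt.2 fun x =>
    (hasDerivAt_integral_Iic hsf_int (hs_cont.mul hf_cont).continuousAt).continuousAt
  obtain ⟨ε, hε, K, c, hc⟩ := exists_local_solution_add_mul_eq hF hf_cont.continuousAt hfc₀_pos hS
    fun x => abs_setIntegral_mul_le_of_integral_eq_one hf_int hf_nonneg hf_prob hs_bdd (Iic x)
  have hnhds : Ioo (-ε) ε ∈ 𝓝 (0 : ℝ) := Ioo_mem_nhds (neg_neg_of_pos hε) hε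
  have hc0 : c 0 = c₀ := by
    simpa [sub_eq_zero] using (hc 0 (mem_of_mem_nhds hnhds)).2
  have hcO : (fun θ => c θ - c₀) =O[𝓝 0] fun θ => θ :=
    .of_bound K (eventually_of_mem hnhds fun θ hθ => (hc θ hθ).2)
  have hSc₀ : ∫ r in Ioi c₀, s r * f r = -S c₀ := by
    linarith [intervalIntegral.integral_Iic_add_Ioi (b := c₀) hsf_int.integrableOn
      hsf_int.integrableOn]
  refine ⟨ε, hε, c, hc0, fun θ hθ => ?_, ?_⟩
  · rw [integral_mul_one_add_mul hf_int.integrableOn hsf_int.integrableOn, (hc θ hθ).1, hc₀]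
  · rw [hSc₀]
    exact hasDerivAt_of_eventually_add_mul_eq (hF c₀) hfc₀_pos.ne' hS.continuousAt hc0 hcO
      (eventually_of_mem hnhds fun θ hθ => (hc θ hθ).1)

/-- Second-price auction with a quantity-targeting reserve price: the reserve price along
the perturbed path `F_θ(x) = ∫_{−∞}^x f(r)(1+θ s(r)) dr` exists locally, satisfies
`(1/n)(1 − F_θ(c(θ))ⁿ) = q`, and is differentiable at `0` with
`c'(0) = (∫_{c₀}^∞ s f)/f(c₀)`: the factor `F(c₀)^{n−1}` cancels and the influence
function is `ψ(r) = 1{r > c₀}/f(c₀)`, exactly as in the single-unit allocation. -/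
theorem stmt13 (n : ℕ) (hn : 1 ≤ n) (f s : ℝ → ℝ)
    (hf_cont : Continuous f) (hf_nonneg : ∀ x, 0 ≤ f x) (hf_prob : ∫ x, f x = 1)
    (hs_cont : Continuous s) (Ms : ℝ) (hs_bdd : ∀ x, |s x| ≤ Ms)
    (hs_mean : ∫ r, s r * f r = 0)
    (q : ℝ) (hq : q ∈ Ioo (0 : ℝ) (1 / n))
    (c₀ : ℝ) (hc₀ : (1 / n : ℝ) * (1 - (∫ r in Iic c₀, f r) ^ n) = q)
    (hfc₀_pos : 0 < f c₀) (hFc₀_pos : 0 < ∫ r in Iic c₀, f r) :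
    ∃ ε > (0 : ℝ), ∃ c : ℝ → ℝ, c 0 = c₀ ∧
      (∀ θ ∈ Ioo (-ε) ε,
        (1 / n : ℝ) * (1 - (∫ r in Iic (c θ), f r * (1 + θ * s r)) ^ n) = q) ∧
      HasDerivAt c ((∫ r in Ioi c₀, s r * f r) / f c₀) 0 :=
  stmt13_general n f s hf_cont hf_nonneg hf_prob hs_cont Ms hs_bdd hs_mean q c₀ hc₀ hfc₀_pos
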